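/- arXiv:2204.08355 — 4 statements merged into one kernel-verified Lean document; each statement's English description precedes it below -/
import Mathlib

section
/- Let Z > 0 and a ∈ ℝ. There exists a function F : ℝ × ℝ → ℝ which is infinitely differentiable (ContDiffOn of order ∞) on the set {(E, x) : E ≥ 0, x > 0, E·a < Z}, such that: (i) for all E > 0 and x > 0 with E·a < Z one has F(E, x) = (1/x)·√(E + Z·x − E·a·x) + E^{−1/2}·(Z − E·a)·arsinh(√E/√((Z − E·a)·x)); and (ii) for all x > 0 one has F(0, x) = 2·√(Z/x). In other words, the apparent singularity of the phase Φ(x; σ) at σ = 0 is removable to all orders as a function of E = σ², with boundary value 2√(Z/x) at zero energy. -/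
/-!
With `B = Z - E a` and `g u = arsinh √u / √u`, the arsinh term of the phase equals
`B / √(B x) · g (E / (B x))` for `E > 0`. Now `g u = ∫₀¹ (1 + u t²)^(-1/2) dt`, and this integral
is a smooth function of `u > -1` by repeated differentiation under the integral sign. Taking it
as the definition of `g` makes the phase smooth up to `E = 0`, where `g 0 = 1` gives
`√(Z x) / x + Z / √(Z x) = 2 √(Z / x)`.
-/

open Set Metric MeasureTheory
open scoped Interval ContDiff

theorem aestronglyMeasurable_uIoc_of_continuousOn_prod {X E : Type*} [TopologicalSpace X]
    [NormedAddCommGroup E] {f : X × ℝ → E} {V : Set (X × ℝ)} {a b : ℝ} (hf : ContinuousOn f V)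
    {x : X} (hx : ∀ t ∈ [[a, b]], (x, t) ∈ V) :
    AEStronglyMeasurable (fun t => f (x, t)) (volume.restrict (Ι a b)) :=
  ((hf.comp (by fun_prop) hx).mono uIoc_subset_uIcc).aestronglyMeasurable measurableSet_uIoc

section ParametricIntegral

universe u

-- One universe for `H` and `E`, so that the induction below can pass to `H →L[ℝ] E`.
variable {H E : Type u} [NormedAddCommGroup H] [NormedSpace ℝ H] [ProperSpace H]
  [NormedAddCommGroup E] [NormedSpace ℝ E]
  {f : H × ℝ → E} {V : Set (H × ℝ)} {s : Set H} {a b : ℝ}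

theorem hasFDerivAt_intervalIntegral_of_contDiffOn (hV : IsOpen V) (hs : IsOpen s)
    (hsV : s ×ˢ [[a, b]] ⊆ V) (hf : ContDiffOn ℝ 1 f V) {x₀ : H} (hx₀ : x₀ ∈ s) :
    HasFDerivAt (fun x => ∫ t in a..b, f (x, t))
      (∫ t in a..b, (fderiv ℝ f (x₀, t)).comp (.inl ℝ H ℝ)) x₀ := by
  set f' : H × ℝ → H →L[ℝ] E := fun q => (fderiv ℝ f q).comp (.inl ℝ H ℝ)
  have hf' : ContinuousOn f' V :=
    (hf.continuousOn_fderiv_of_isOpen hV le_rfl).clm_comp continuousOn_const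
  obtain ⟨r, hr, hrs⟩ := nhds_basis_closedBall.mem_iff.1 (hs.mem_nhds hx₀)
  have hKV : closedBall x₀ r ×ˢ [[a, b]] ⊆ V := (prod_mono hrs le_rfl).trans hsV
  obtain ⟨C, hC⟩ := ((isCompact_closedBall x₀ r).prod isCompact_uIcc).exists_bound_of_continuousOn
    (hf'.mono hKV)
  have hmem : ∀ x ∈ closedBall x₀ r, ∀ t ∈ [[a, b]], (x, t) ∈ V :=
    fun x hx t ht => hKV ⟨hx, ht⟩
  refine intervalIntegral.hasFDerivAt_integral_of_dominated_of_fderiv_le (μ := volume)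
    (F := fun x t => f (x, t)) (F' := fun x t => f' (x, t)) (bound := fun _ => C)
    (ball_mem_nhds x₀ hr) ?_ ?_ ?_ ?_ intervalIntegrable_const ?_
  · filter_upwards [closedBall_mem_nhds x₀ hr] with x hx
    exact aestronglyMeasurable_uIoc_of_continuousOn_prod hf.continuousOn (hmem x hx)
  · exact (hf.continuousOn.comp (by fun_prop) (hmem x₀ (mem_closedBall_self hr.le))
      ).intervalIntegrable
  · exact aestronglyMeasurable_uIoc_of_continuousOn_prod hf' (hmem x₀ (mem_closedBall_self hr.le))
  · exact .of_forall fun t ht x hx => hC (x, t) ⟨ball_subset_closedBall hx, uIoc_subset_uIcc ht⟩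
  · refine .of_forall fun t ht x hx => ?_
    have hxt := hmem x (ball_subset_closedBall hx) t (uIoc_subset_uIcc ht)
    exact ((hf.differentiableOn one_ne_zero).differentiableAt (hV.mem_nhds hxt)).hasFDerivAt.comp
      x (hasFDerivAt_prodMk_left x t)

theorem contDiffOn_intervalIntegral (hV : IsOpen V) (hs : IsOpen s)
    (hsV : s ×ˢ [[a, b]] ⊆ V) (hf : ContDiffOn ℝ ∞ f V) :
    ContDiffOn ℝ ∞ (fun x => ∫ t in a..b, f (x, t)) s := by
  refine contDiffOn_infty.2 fun n => ?_
  induction n generalizing E with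
  | zero =>
    exact contDiffOn_zero.2 fun x hx => (hasFDerivAt_intervalIntegral_of_contDiffOn hV hs hsV
      (hf.of_le (by simp)) hx).continuousAt.continuousWithinAt
  | succ n ih =>
    have hderiv := fun x (hx : x ∈ s) =>
      hasFDerivAt_intervalIntegral_of_contDiffOn hV hs hsV (hf.of_le (by simp)) hx
    rw [Nat.cast_add_one, contDiffOn_succ_iff_fderiv_of_isOpen hs]
    refine ⟨fun x hx => (hderiv x hx).differentiableAt.differentiableWithinAt, by simp, ?_⟩
    exact (ih ((hf.fderiv_of_isOpen hV le_rfl).clm_comp contDiffOn_const)).congr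
      fun x hx => (hderiv x hx).fderiv

end ParametricIntegral

noncomputable def arsinhSqrtDivSqrt (u : ℝ) : ℝ := ∫ t in (0 : ℝ)..1, (√(1 + u * t ^ 2))⁻¹

theorem contDiffOn_arsinhSqrtDivSqrt : ContDiffOn ℝ ∞ arsinhSqrtDivSqrt (Ioi (-1)) := by
  have hV : IsOpen {q : ℝ × ℝ | 0 < 1 + q.1 * q.2 ^ 2} := isOpen_lt continuous_const (by fun_prop)
  refine contDiffOn_intervalIntegral (f := fun q : ℝ × ℝ => (√(1 + q.1 * q.2 ^ 2))⁻¹) hV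
    isOpen_Ioi ?_ fun q hq => ?_
  · rintro ⟨u, t⟩ ⟨hu, ht⟩
    rw [uIcc_of_le zero_le_one] at ht
    have ht2 : t ^ 2 ≤ 1 := pow_le_one₀ ht.1 ht.2
    have hu : -1 < u := hu
    show 0 < 1 + u * t ^ 2
    rcases le_total 0 u with hu0 | hu0
    · positivity
    · nlinarith [sq_nonneg t]
  · have hq : 0 < 1 + q.1 * q.2 ^ 2 := hq
    have hsqrt : ContDiffAt ℝ ∞ (fun q : ℝ × ℝ => √(1 + q.1 * q.2 ^ 2)) q :=
      (Real.contDiffAt_sqrt hq.ne').comp q (by fun_prop)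
    exact (hsqrt.inv (Real.sqrt_pos.2 hq).ne').contDiffWithinAt

theorem arsinhSqrtDivSqrt_of_pos {u : ℝ} (hu : 0 < u) :
    arsinhSqrtDivSqrt u = Real.arsinh √u / √u := by
  have hderiv : ∀ t ∈ [[(0 : ℝ), 1]],
      HasDerivAt (fun t => Real.arsinh (√u * t) / √u) (√(1 + u * t ^ 2))⁻¹ t := by
    intro t _
    refine (((Real.hasDerivAt_arsinh _).comp t ((hasDerivAt_id' t).const_mul √u)).div_const
      √u).congr_deriv ?_
    rw [mul_pow, Real.sq_sqrt hu.le]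
    field_simp
  have hcont : Continuous fun t : ℝ => (√(1 + u * t ^ 2))⁻¹ :=
    (by fun_prop : Continuous fun t : ℝ => √(1 + u * t ^ 2)).inv₀
      fun t => (Real.sqrt_pos.2 (by positivity)).ne'
  rw [arsinhSqrtDivSqrt, intervalIntegral.integral_eq_sub_of_hasDerivAt hderiv
    (hcont.intervalIntegrable 0 1)]
  simp

theorem arsinhSqrtDivSqrt_zero : arsinhSqrtDivSqrt 0 = 1 := by
  simp [arsinhSqrtDivSqrt]

noncomputable def coulombPhase (Z a : ℝ) (p : ℝ × ℝ) : ℝ :=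
  1 / p.2 * √(p.1 + Z * p.2 - p.1 * a * p.2)
    + (Z - p.1 * a) / √((Z - p.1 * a) * p.2) * arsinhSqrtDivSqrt (p.1 / ((Z - p.1 * a) * p.2))

theorem contDiffOn_coulombPhase (Z a : ℝ) :
    ContDiffOn ℝ ∞ (coulombPhase Z a) {p : ℝ × ℝ | 0 ≤ p.1 ∧ 0 < p.2 ∧ p.1 * a < Z} := by
  rintro ⟨E, x⟩ ⟨hE, hx, hEa⟩
  have hBx : 0 < (Z - E * a) * x := mul_pos (by linarith) hx
  have hx₀ : x ≠ 0 := hx.ne'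
  have hBx₀ : (Z - E * a) * x ≠ 0 := hBx.ne'
  have hsqrt₀ : √((Z - E * a) * x) ≠ 0 := (Real.sqrt_pos.2 hBx).ne'
  have hrad₀ : E + Z * x - E * a * x ≠ 0 := by nlinarith
  have hg : ContDiffAt ℝ ∞ arsinhSqrtDivSqrt (E / ((Z - E * a) * x)) :=
    contDiffOn_arsinhSqrtDivSqrt.contDiffAt
      (Ioi_mem_nhds (by linarith [div_nonneg hE hBx.le]))
  refine ContDiffAt.contDiffWithinAt ?_
  unfold coulombPhase
  fun_prop (disch := assumption)

theorem coulombPhase_of_pos {Z a E x : ℝ} (hE : 0 < E) (hx : 0 < x) (hEa : E * a < Z) :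
    coulombPhase Z a (E, x) = 1 / x * √(E + Z * x - E * a * x)
      + E ^ (-(1 / 2) : ℝ) * (Z - E * a) * Real.arsinh (√E / √((Z - E * a) * x)) := by
  have hBx : 0 < (Z - E * a) * x := mul_pos (by linarith) hx
  have hsBx : 0 < √((Z - E * a) * x) := Real.sqrt_pos.2 hBx
  rw [coulombPhase, arsinhSqrtDivSqrt_of_pos (div_pos hE hBx), Real.sqrt_div' _ hBx.le,
    Real.rpow_neg hE.le, ← Real.sqrt_eq_rpow]
  generalize √((Z - E * a) * x) = s at hsBx ⊢
  field_simp

theorem coulombPhase_zero_energy {Z : ℝ} (a : ℝ) (hZ : 0 < Z) {x : ℝ} (hx : 0 < x) :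
    coulombPhase Z a (0, x) = 2 * √(Z / x) := by
  simp only [coulombPhase, zero_mul, sub_zero, zero_add, zero_div, arsinhSqrtDivSqrt_zero,
    mul_one]
  rw [Real.sqrt_mul hZ.le, Real.sqrt_div hZ.le]
  nth_rw 1 [← Real.sq_sqrt hx.le]
  nth_rw 2 [← Real.sq_sqrt hZ.le]
  field_simp
  ring

/-- The phase `Φ(x;σ)` is, as a function of `(E, x)` with `E = σ²`,
smooth up to `E = 0` on the attractive region `{E ≥ 0, x > 0, E·a < Z}`, with boundary
value `2√(Z/x)` at zero energy. -/
theorem stmt1 (Z a : ℝ) (hZ : 0 < Z) :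
    ∃ F : ℝ × ℝ → ℝ,
      ContDiffOn ℝ (⊤ : ℕ∞) F {p : ℝ × ℝ | 0 ≤ p.1 ∧ 0 < p.2 ∧ p.1 * a < Z} ∧
      (∀ E : ℝ, 0 < E → ∀ x : ℝ, 0 < x → E * a < Z →
        F (E, x) = (1 / x) * Real.sqrt (E + Z * x - E * a * x)
          + E ^ (-(1 / 2) : ℝ) * (Z - E * a)
            * Real.arsinh (Real.sqrt E / Real.sqrt ((Z - E * a) * x))) ∧
      (∀ x : ℝ, 0 < x → F (0, x) = 2 * Real.sqrt (Z / x)) :=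
  ⟨coulombPhase Z a, contDiffOn_coulombPhase Z a,
    fun _ hE _ hx hEa => coulombPhase_of_pos hE hx hEa,
    fun _ hx => coulombPhase_zero_energy a hZ hx⟩
end

section
/- Let Z > 0, σ ≥ 0, x̄ > 0 and n ∈ ℝ. Then for all smooth functions f, g : (0, x̄) → ℂ with compact support contained in the open interval (0, x̄): ∫₀^{x̄} conj(f(x))·(Ng)(x)·x^{−(n+1)} dx = ∫₀^{x̄} conj((Nf)(x))·g(x)·x^{−(n+1)} dx. That is, the leC-normal operator N is formally self-adjoint with respect to the scattering L² pairing. -/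
/-!
With the weight `w x = x ^ (-(n + 1))` and the real coefficient `a x = 2 √(σ² + Z x) x ^ (1 - n)`,
the leC-normal operator satisfies `w · N u = i (a u' + a' u / 2)` for `x > 0`. For such a
symmetrized first-order operator `L`, the difference `conj f · L g - conj (L f) · g` is the
derivative of `i a conj f g`, so the two pairings differ by the integral of the derivative of a
compactly supported function, which is zero.
-/

open MeasureTheory

/-- The leC-normal operator
`(Nu)(x) = 2i·x·√(σ² + Z·x)·( x·u'(x) − ((n−1)/2)·u(x) + (Z/4)·(x/(σ² + Z·x))·u(x) )`. -/
noncomputable def NleC (Z σ n : ℝ) (u : ℝ → ℂ) : ℝ → ℂ := fun x =>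
  2 * Complex.I * (x : ℂ) * (Real.sqrt (σ ^ 2 + Z * x) : ℂ)
    * ((x : ℂ) * deriv u x - (((n - 1) / 2 : ℝ) : ℂ) * u x
      + ((Z / 4 : ℝ) : ℂ) * ((x / (σ ^ 2 + Z * x) : ℝ) : ℂ) * u x)

open Complex ComplexConjugate Set

/-- The operator `i·(a·∂ + a'/2)`, where `a'` stands for the derivative of `a`. -/
noncomputable def symmDerivOp (a a' : ℝ → ℝ) (u : ℝ → ℂ) (x : ℝ) : ℂ :=
  I * (a x * deriv u x + a' x / 2 * u x)

theorem hasDerivAt_I_mul_mul_conj_mul {a a' : ℝ → ℝ} {f g : ℝ → ℂ} {x : ℝ}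
    (ha : HasDerivAt a (a' x) x) (hf : DifferentiableAt ℝ f x) (hg : DifferentiableAt ℝ g x) :
    HasDerivAt (fun t => I * a t * (conj (f t) * g t))
      (conj (f x) * symmDerivOp a a' g x - conj (symmDerivOp a a' f x) * g x) x := by
  have hf' : HasDerivAt (fun t => conj (f t)) (conj (deriv f x)) x := hf.hasDerivAt.star
  refine ((ha.ofReal_comp.const_mul I).mul (hf'.mul hg.hasDerivAt)).congr_deriv ?_
  simp only [symmDerivOp, Pi.mul_apply, map_mul, map_add, map_div₀, conj_I, conj_ofReal, map_ofNat]
  ring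

noncomputable def leCCoeff (Z σ n t : ℝ) : ℝ :=
  2 * √(σ ^ 2 + Z * t) * t ^ (1 - n)

noncomputable def leCCoeffDeriv (Z σ n t : ℝ) : ℝ :=
  Z * t ^ (1 - n) / √(σ ^ 2 + Z * t) + 2 * √(σ ^ 2 + Z * t) * ((1 - n) * t ^ (-n))

section Pointwise

variable {Z σ n x : ℝ}

theorem hasDerivAt_leCCoeff (hx : 0 < x) (hs : 0 < σ ^ 2 + Z * x) :
    HasDerivAt (leCCoeff Z σ n) (leCCoeffDeriv Z σ n x) x := by
  have hsqrt : HasDerivAt (fun t => √(σ ^ 2 + Z * t)) (Z / (2 * √(σ ^ 2 + Z * x))) x := by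
    simpa [div_eq_mul_inv, mul_comm] using
      (((hasDerivAt_id x).const_mul Z).const_add (σ ^ 2)).sqrt hs.ne'
  have hpow : HasDerivAt (fun t => t ^ (1 - n)) ((1 - n) * x ^ (-n)) x := by
    simpa using Real.hasDerivAt_rpow_const (p := 1 - n) (Or.inl hx.ne')
  refine ((hsqrt.const_mul 2).mul hpow).congr_deriv ?_
  have : √(σ ^ 2 + Z * x) ≠ 0 := by positivity
  simp only [leCCoeffDeriv]
  field_simp

theorem NleC_mul_rpow_eq_symmDerivOp (hx : 0 < x) (hs : 0 < σ ^ 2 + Z * x) (u : ℝ → ℂ) :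
    NleC Z σ n u x * ((x ^ (-(n + 1)) : ℝ) : ℂ)
      = symmDerivOp (leCCoeff Z σ n) (leCCoeffDeriv Z σ n) u x := by
  have hpow₁ : x ^ (1 - n) = x ^ (-(n + 1)) * x ^ 2 := by
    rw [show 1 - n = -(n + 1) + (2 : ℕ) by push_cast; ring, Real.rpow_add_natCast hx.ne']
  have hpow₀ : x ^ (-n) = x ^ (-(n + 1)) * x := by
    rw [show -n = -(n + 1) + 1 by ring, Real.rpow_add_one hx.ne']
  have hsq : (√(σ ^ 2 + Z * x) : ℂ) ^ 2 = σ ^ 2 + Z * x := by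
    exact_mod_cast Real.sq_sqrt hs.le
  have hsqrt : (√(σ ^ 2 + Z * x) : ℂ) ≠ 0 := by exact_mod_cast (Real.sqrt_pos.2 hs).ne'
  simp only [NleC, symmDerivOp, leCCoeff, leCCoeffDeriv, hpow₁, hpow₀]
  push_cast
  rw [← hsq]
  field_simp
  ring

end Pointwise

theorem NleC_eq_zero_of_notMem_tsupport {Z σ n x : ℝ} {u : ℝ → ℂ} (hx : x ∉ tsupport u) :
    NleC Z σ n u x = 0 := by
  simp [NleC, image_eq_zero_of_notMem_tsupport hx, deriv_of_notMem_tsupport hx]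

theorem continuousOn_NleC (Z σ n : ℝ) {u : ℝ → ℂ} (hu : ContDiff ℝ 1 u) :
    ContinuousOn (NleC Z σ n u) {x | σ ^ 2 + Z * x ≠ 0} := by
  have hquot : ContinuousOn (fun x : ℝ => x / (σ ^ 2 + Z * x)) {x | σ ^ 2 + Z * x ≠ 0} :=
    continuousOn_id.div (by fun_prop) fun _ hx => hx
  have := hu.continuous
  have := hu.continuous_deriv_one
  unfold NleC
  fun_prop

theorem integrable_of_continuousOn_tsupport {E : Type*} [NormedAddCommGroup E] {h u : ℝ → E}
    (hu : HasCompactSupport u) (hc : ContinuousOn h (tsupport u))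
    (h0 : ∀ x ∉ tsupport u, h x = 0) : Integrable h :=
  (hc.integrableOn_compact hu.isCompact).integrable_of_forall_notMem_eq_zero h0

section Integral

variable {Z σ n : ℝ} {f g : ℝ → ℂ}

theorem hasDerivAt_I_mul_leCCoeff_mul_conj_mul (hZ : 0 < Z) (hf : ContDiff ℝ 1 f)
    (hfpos : tsupport f ⊆ Ioi 0) (hg : ContDiff ℝ 1 g) (x : ℝ) :
    HasDerivAt (fun t => I * leCCoeff Z σ n t * (conj (f t) * g t))
      (conj (f x) * NleC Z σ n g x * ((x ^ (-(n + 1)) : ℝ) : ℂ)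
        - conj (NleC Z σ n f x) * g x * ((x ^ (-(n + 1)) : ℝ) : ℂ)) x := by
  by_cases hx : x ∈ tsupport f
  · have hx0 : 0 < x := hfpos hx
    have hs : 0 < σ ^ 2 + Z * x := by positivity
    convert hasDerivAt_I_mul_mul_conj_mul (hasDerivAt_leCCoeff hx0 hs)
      (hf.differentiable one_ne_zero x) (hg.differentiable one_ne_zero x) using 1
    rw [← NleC_mul_rpow_eq_symmDerivOp hx0 hs, ← NleC_mul_rpow_eq_symmDerivOp hx0 hs, map_mul,
      conj_ofReal]
    ring
  · have hzero : (fun t => I * leCCoeff Z σ n t * (conj (f t) * g t)) =ᶠ[nhds x] fun _ => 0 :=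
      (notMem_tsupport_iff_eventuallyEq.1 hx).mono fun t ht => by simp [ht]
    simpa [image_eq_zero_of_notMem_tsupport hx, NleC_eq_zero_of_notMem_tsupport hx] using
      (hasDerivAt_const x (0 : ℂ)).congr_of_eventuallyEq hzero

theorem integral_conj_mul_NleC_mul_rpow_eq (hZ : 0 < Z) (hf : ContDiff ℝ 1 f)
    (hfc : HasCompactSupport f) (hfpos : tsupport f ⊆ Ioi 0) (hg : ContDiff ℝ 1 g) :
    ∫ x, conj (f x) * NleC Z σ n g x * ((x ^ (-(n + 1)) : ℝ) : ℂ)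
      = ∫ x, conj (NleC Z σ n f x) * g x * ((x ^ (-(n + 1)) : ℝ) : ℂ) := by
  have hN : ∀ {u : ℝ → ℂ}, ContDiff ℝ 1 u → ContinuousOn (NleC Z σ n u) (tsupport f) :=
    fun hu => (continuousOn_NleC Z σ n hu).mono fun x hx => by
      have : 0 < x := hfpos hx
      exact (by positivity : 0 < σ ^ 2 + Z * x).ne'
  have hw : ContinuousOn (fun x : ℝ => ((x ^ (-(n + 1)) : ℝ) : ℂ)) (tsupport f) :=
    continuous_ofReal.comp_continuousOn
      (continuousOn_id.rpow_const fun x hx => Or.inl (hfpos hx).ne')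
  have hA : Integrable fun x => conj (f x) * NleC Z σ n g x * ((x ^ (-(n + 1)) : ℝ) : ℂ) :=
    integrable_of_continuousOn_tsupport hfc
      ((hf.continuous.star.continuousOn.mul (hN hg)).mul hw)
      fun x hx => by simp [image_eq_zero_of_notMem_tsupport hx]
  have hB : Integrable fun x => conj (NleC Z σ n f x) * g x * ((x ^ (-(n + 1)) : ℝ) : ℂ) :=
    integrable_of_continuousOn_tsupport hfc
      (((hN hf).star.mul hg.continuous.continuousOn).mul hw)
      fun x hx => by simp [NleC_eq_zero_of_notMem_tsupport hx]
  have hderiv := hasDerivAt_I_mul_leCCoeff_mul_conj_mul (σ := σ) (n := n) hZ hf hfpos hg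
  have hflux : Integrable fun t => I * leCCoeff Z σ n t * (conj (f t) * g t) :=
    integrable_of_continuousOn_tsupport hfc
      (fun x _ => (hderiv x).continuousAt.continuousWithinAt)
      fun x hx => by simp [image_eq_zero_of_notMem_tsupport hx]
  rw [← sub_eq_zero, ← integral_sub hA hB]
  exact integral_eq_zero_of_hasDerivAt_of_integrable hderiv (hA.sub hB) hflux

end Integral

theorem stmt6_general (Z σ n xbar : ℝ) (hZ : 0 < Z)
    (f g : ℝ → ℂ)
    (hf : ContDiff ℝ (⊤ : ℕ∞) f) (hfc : HasCompactSupport f)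
    (hfsupp : tsupport f ⊆ Set.Ioo 0 xbar)
    (hg : ContDiff ℝ (⊤ : ℕ∞) g) :
    ∫ x in Set.Ioo (0 : ℝ) xbar,
        (starRingEnd ℂ) (f x) * NleC Z σ n g x * ((x ^ (-(n + 1)) : ℝ) : ℂ)
      = ∫ x in Set.Ioo (0 : ℝ) xbar,
        (starRingEnd ℂ) (NleC Z σ n f x) * g x * ((x ^ (-(n + 1)) : ℝ) : ℂ) := by
  have hf₁ : ContDiff ℝ 1 f := hf.of_le (by exact_mod_cast le_top)
  have hg₁ : ContDiff ℝ 1 g := hg.of_le (by exact_mod_cast le_top)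
  rw [setIntegral_eq_integral_of_forall_compl_eq_zero fun x hx => by
      simp [image_eq_zero_of_notMem_tsupport fun h => hx (hfsupp h)],
    setIntegral_eq_integral_of_forall_compl_eq_zero fun x hx => by
      simp [NleC_eq_zero_of_notMem_tsupport fun h => hx (hfsupp h)]]
  exact integral_conj_mul_NleC_mul_rpow_eq hZ hf₁ hfc (hfsupp.trans Ioo_subset_Ioi_self) hg₁

/-- The leC-normal operator is formally self-adjoint with respect to
the scattering L² pairing `⟨f, g⟩ = ∫₀^{x̄} conj(f)·g·x^{−(n+1)} dx`. -/
theorem stmt6 (Z σ n xbar : ℝ) (hZ : 0 < Z) (hσ : 0 ≤ σ) (hxbar : 0 < xbar)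
    (f g : ℝ → ℂ)
    (hf : ContDiff ℝ (⊤ : ℕ∞) f) (hfc : HasCompactSupport f)
    (hfsupp : tsupport f ⊆ Set.Ioo 0 xbar)
    (hg : ContDiff ℝ (⊤ : ℕ∞) g) (hgc : HasCompactSupport g)
    (hgsupp : tsupport g ⊆ Set.Ioo 0 xbar) :
    ∫ x in Set.Ioo (0 : ℝ) xbar,
        (starRingEnd ℂ) (f x) * NleC Z σ n g x * ((x ^ (-(n + 1)) : ℝ) : ℂ)
      = ∫ x in Set.Ioo (0 : ℝ) xbar,
        (starRingEnd ℂ) (NleC Z σ n f x) * g x * ((x ^ (-(n + 1)) : ℝ) : ℂ) :=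
  stmt6_general Z σ n xbar hZ f g hf hfc hfsupp hg
end

section
/- Let a > 0 and σ, Z ∈ ℝ, let f : (0,∞) → ℂ be a function, and let u : (0,∞) → ℂ be twice differentiable and satisfy, for all x > 0: (1 + a·x)·x²·(d/dx)(x²·u'(x)) + σ²·u(x) + Z·x·u(x) = −f(x). Define v : (0, 1/a) → ℂ by v(y) = u(y/(1 − a·y)). Then v is twice differentiable and satisfies, for all y ∈ (0, 1/a): y²·(d/dy)(y²·v'(y)) + σ²·v(y) + (Z − σ²·a)·y·v(y) = −(1 − a·y)·f(y/(1 − a·y)). That is, the change of variable y = x/(1 + a·x) reduces the Schwarzschild-like model ODE with subleading coefficient a to the exact Coulomb model ODE with σ-dependent charge Z − σ²·a. -/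
/-!
The vector field `x²∂ₓ` is invariant under the Möbius map `g(y) = y/(1 - a·y)`: since
`g'(y) = 1/(1 - a·y)² = g(y)²/y²`, the chain rule gives `y²(u ∘ g)'(y) = g(y)² u'(g y)`.
Hence `(x²∂ₓ)²` commutes with `g` as well (in `r = 1/x` the map is a translation of `r`),
and multiplying the original equation at `x = g y` by `1 - a·y = 1/(1 + a·x)` gives the
Coulomb equation.
-/

open Filter Topology Set

/-- The operator `(Q v)(x) = x²·(d/dx)(x²·v'(x))`, i.e. `Q = (x²∂ₓ)²` on the half-line. -/
noncomputable def Qop (f : ℝ → ℂ) : ℝ → ℂ :=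
  fun x => (x : ℂ) ^ 2 * deriv (fun y : ℝ => (y : ℂ) ^ 2 * deriv f y) x

noncomputable def scatteringDeriv (w : ℝ → ℂ) (t : ℝ) : ℂ := (t : ℂ) ^ 2 * deriv w t

theorem Qop_eq_scatteringDeriv_scatteringDeriv (u : ℝ → ℂ) :
    Qop u = scatteringDeriv (scatteringDeriv u) := rfl

theorem differentiableAt_scatteringDeriv {u : ℝ → ℂ} {t : ℝ}
    (hu : DifferentiableAt ℝ (deriv u) t) : DifferentiableAt ℝ (scatteringDeriv u) t :=
  (Complex.ofRealCLM.differentiableAt.pow 2).mul hu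

theorem scatteringDeriv_comp {g : ℝ → ℝ} {u : ℝ → ℂ} {t : ℝ} (ht : t ≠ 0)
    (hg : HasDerivAt g (g t ^ 2 / t ^ 2) t) (hu : DifferentiableAt ℝ u (g t)) :
    scatteringDeriv (fun t => u (g t)) t = scatteringDeriv u (g t) := by
  have ht' : (t : ℂ) ≠ 0 := Complex.ofReal_ne_zero.mpr ht
  have hd : HasDerivAt (fun s => u (g s)) ((g t ^ 2 / t ^ 2) • deriv u (g t)) t :=
    hu.hasDerivAt.scomp t hg
  simp only [scatteringDeriv, hd.deriv, Complex.real_smul]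
  push_cast
  field_simp

theorem Qop_comp {g : ℝ → ℝ} {u : ℝ → ℂ} {y : ℝ}
    (hg : ∀ᶠ t in 𝓝 y, t ≠ 0 ∧ HasDerivAt g (g t ^ 2 / t ^ 2) t)
    (hu : ∀ᶠ t in 𝓝 y, DifferentiableAt ℝ u (g t))
    (hu' : DifferentiableAt ℝ (deriv u) (g y)) :
    Qop (fun t => u (g t)) y = Qop u (g y) := by
  have hev : scatteringDeriv (fun t => u (g t)) =ᶠ[𝓝 y] fun t => scatteringDeriv u (g t) := by
    filter_upwards [hg, hu] with t ⟨ht, hgt⟩ hut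
    exact scatteringDeriv_comp ht hgt hut
  obtain ⟨hy, hgy⟩ := hg.self_of_nhds
  rw [Qop_eq_scatteringDeriv_scatteringDeriv, Qop_eq_scatteringDeriv_scatteringDeriv,
    scatteringDeriv, hev.deriv_eq, ← scatteringDeriv,
    scatteringDeriv_comp hy hgy (differentiableAt_scatteringDeriv hu')]

theorem differentiableAt_deriv_comp {g g' : ℝ → ℝ} {u : ℝ → ℂ} {y : ℝ}
    (hg : ∀ᶠ t in 𝓝 y, HasDerivAt g (g' t) t) (hu : ∀ᶠ t in 𝓝 y, DifferentiableAt ℝ u (g t))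
    (hg' : DifferentiableAt ℝ g' y) (hu' : DifferentiableAt ℝ (deriv u) (g y)) :
    DifferentiableAt ℝ (deriv (fun t => u (g t))) y := by
  have hev : deriv (fun t => u (g t)) =ᶠ[𝓝 y] fun t => g' t • deriv u (g t) := by
    filter_upwards [hg, hu] with t hgt hut
    exact (hut.hasDerivAt.scomp t hgt).deriv
  exact (hg'.smul (hu'.comp y hg.self_of_nhds.differentiableAt)).congr_of_eventuallyEq hev

theorem hasDerivAt_div_one_sub_mul {a t : ℝ} (ht : t ≠ 0) (h : 1 - a * t ≠ 0) :
    HasDerivAt (fun s => s / (1 - a * s)) ((t / (1 - a * t)) ^ 2 / t ^ 2) t := by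
  have hden : HasDerivAt (fun s => 1 - a * s) (-a) t := by
    simpa using ((hasDerivAt_id t).const_mul a).const_sub 1
  refine ((hasDerivAt_id' t).div hden h).congr_deriv ?_
  field_simp
  ring

theorem one_sub_mul_pos_of_lt_one_div {a y : ℝ} (hy : 0 < y) (hya : y < 1 / a) :
    0 < 1 - a * y := by
  have ha : 0 < a := one_div_pos.mp (hy.trans hya)
  rw [lt_div_iff₀ ha] at hya
  linarith

theorem eventually_hasDerivAt_div_one_sub_mul {a y : ℝ} (hy : 0 < y) (hya : y < 1 / a) :
    ∀ᶠ t in 𝓝 y, 0 < t ∧ 0 < t / (1 - a * t) ∧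
      HasDerivAt (fun s => s / (1 - a * s)) ((t / (1 - a * t)) ^ 2 / t ^ 2) t := by
  filter_upwards [isOpen_Ioo.mem_nhds ⟨hy, hya⟩] with t ⟨ht, hta⟩
  have hden := one_sub_mul_pos_of_lt_one_div ht hta
  exact ⟨ht, div_pos ht hden, hasDerivAt_div_one_sub_mul ht.ne' hden.ne'⟩

theorem coulomb_of_schwarzschild {a σ Z y : ℝ} {Q v F : ℂ} (hy : 1 - a * y ≠ 0)
    (h : ((1 + a * (y / (1 - a * y)) : ℝ) : ℂ) * Q + ((σ ^ 2 : ℝ) : ℂ) * v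
      + ((Z * (y / (1 - a * y)) : ℝ) : ℂ) * v = -F) :
    Q + ((σ ^ 2 : ℝ) : ℂ) * v + (((Z - σ ^ 2 * a) * y : ℝ) : ℂ) * v
      = -(((1 - a * y : ℝ) : ℂ) * F) := by
  have hy' : (1 - a * y : ℂ) ≠ 0 := by exact_mod_cast hy
  push_cast at h ⊢
  field_simp at h
  linear_combination h

theorem stmt11_general (a σ Z : ℝ) (f u : ℝ → ℂ)
    (hu : ∀ x : ℝ, 0 < x → DifferentiableAt ℝ u x)
    (hu' : ∀ x : ℝ, 0 < x → DifferentiableAt ℝ (deriv u) x)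
    (hode : ∀ x : ℝ, 0 < x →
      ((1 + a * x : ℝ) : ℂ) * Qop u x + ((σ ^ 2 : ℝ) : ℂ) * u x
          + ((Z * x : ℝ) : ℂ) * u x = -f x) :
    (∀ y : ℝ, 0 < y → y < 1 / a →
      DifferentiableAt ℝ (fun t : ℝ => u (t / (1 - a * t))) y) ∧
    (∀ y : ℝ, 0 < y → y < 1 / a →
      DifferentiableAt ℝ (deriv (fun t : ℝ => u (t / (1 - a * t)))) y) ∧
    (∀ y : ℝ, 0 < y → y < 1 / a →
      Qop (fun t : ℝ => u (t / (1 - a * t))) y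
          + ((σ ^ 2 : ℝ) : ℂ) * u (y / (1 - a * y))
          + (((Z - σ ^ 2 * a) * y : ℝ) : ℂ) * u (y / (1 - a * y))
        = -(((1 - a * y : ℝ) : ℂ) * f (y / (1 - a * y)))) := by
  refine ⟨fun y hy hya => ?_, fun y hy hya => ?_, fun y hy hya => ?_⟩
  all_goals
    have hev := eventually_hasDerivAt_div_one_sub_mul hy hya
    have hu_g : ∀ᶠ t in 𝓝 y, DifferentiableAt ℝ u (t / (1 - a * t)) :=
      hev.mono fun t ht => hu _ ht.2.1
    obtain ⟨-, hx, hg⟩ := hev.self_of_nhds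
  · exact hu_g.self_of_nhds.comp y hg.differentiableAt
  · exact differentiableAt_deriv_comp (hev.mono fun t ht => ht.2.2) hu_g
      ((hg.differentiableAt.pow 2).div (differentiableAt_pow 2) (pow_ne_zero 2 hy.ne')) (hu' _ hx)
  · rw [Qop_comp (hev.mono fun t ht => ⟨ht.1.ne', ht.2.2⟩) hu_g (hu' _ hx)]
    exact coulomb_of_schwarzschild (one_sub_mul_pos_of_lt_one_div hy hya).ne' (hode _ hx)

/-- The change of variables `y = x/(1 + a·x)` (i.e. `x = y/(1 − a·y)`)
reduces the Schwarzschild-like model ODE with subleading coefficient `a` to the exact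
Coulomb model ODE with σ-dependent charge `Z − σ²·a`. -/
theorem stmt11 (a σ Z : ℝ) (ha : 0 < a) (f u : ℝ → ℂ)
    (hu : ∀ x : ℝ, 0 < x → DifferentiableAt ℝ u x)
    (hu' : ∀ x : ℝ, 0 < x → DifferentiableAt ℝ (deriv u) x)
    (hode : ∀ x : ℝ, 0 < x →
      ((1 + a * x : ℝ) : ℂ) * Qop u x + ((σ ^ 2 : ℝ) : ℂ) * u x
          + ((Z * x : ℝ) : ℂ) * u x = -f x) :
    (∀ y : ℝ, 0 < y → y < 1 / a →
      DifferentiableAt ℝ (fun t : ℝ => u (t / (1 - a * t))) y) ∧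
    (∀ y : ℝ, 0 < y → y < 1 / a →
      DifferentiableAt ℝ (deriv (fun t : ℝ => u (t / (1 - a * t)))) y) ∧
    (∀ y : ℝ, 0 < y → y < 1 / a →
      Qop (fun t : ℝ => u (t / (1 - a * t))) y
          + ((σ ^ 2 : ℝ) : ℂ) * u (y / (1 - a * y))
          + (((Z - σ ^ 2 * a) * y : ℝ) : ℂ) * u (y / (1 - a * y))
        = -(((1 - a * y : ℝ) : ℂ) * f (y / (1 - a * y)))) :=
  stmt11_general a σ Z f u hu hu' hode
end

section
/- Let Z > 0, x̄ > 0, ν > 0 and ε > 0. Then sup over x ∈ (0, x̄] of x^{ν+ε}·| (σ² + Z·x)^{−ν} − (Z·x)^{−ν} | tends to 0 as σ → 0⁺ (all powers being real powers of positive reals). That is, the weights (σ² + Zx)^{−ν} converge to (Zx)^{−ν} as σ → 0⁺ uniformly on (0, x̄] after multiplication by x^{ν+ε}, for every ε > 0. -/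
/-!
For `x ≤ δ` the error `x^{ν+ε} ((Zx)^{-ν} - (σ² + Zx)^{-ν}) ≥ 0` is at most
`x^{ν+ε} (Zx)^{-ν} = Z^{-ν} x^ε ≤ Z^{-ν} δ^ε`, which is small once `δ` is small; this is where
the extra factor `x^ε` is needed. For `x ≥ δ` the increment `a^{-ν} - (σ² + a)^{-ν}` of the
convex function `a ↦ a^{-ν}` decreases in `a`, so the error is at most
`x̄^{ν+ε} ((Zδ)^{-ν} - (σ² + Zδ)^{-ν})`, which tends to `0` with `σ` for fixed `δ`.
-/

open Real Set Filter Topology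

lemma tendsto_biSup_of_forall_eventually_lt {α ι : Type*} {l : Filter α} {s : Set ι}
    {F : α → ι → ℝ} (hF : ∀ a, ∀ i ∈ s, 0 ≤ F a i)
    (h : ∀ η > 0, ∀ᶠ a in l, ∀ i ∈ s, F a i < η) :
    Tendsto (fun a => ⨆ i ∈ s, F a i) l (𝓝 0) := by
  rw [Metric.tendsto_nhds]
  intro η hη
  filter_upwards [h (η / 2) (half_pos hη)] with a ha
  have hnonneg : 0 ≤ ⨆ i ∈ s, F a i :=
    Real.iSup_nonneg fun i => Real.iSup_nonneg fun hi => hF a i hi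
  have hle : ⨆ i ∈ s, F a i ≤ η / 2 :=
    Real.iSup_le (fun i => Real.iSup_le (fun hi => (ha i hi).le) (by positivity)) (by positivity)
  rw [Real.dist_eq, sub_zero, abs_of_nonneg hnonneg]
  linarith

section NegativePowers

variable {ν t a b : ℝ}

lemma rpow_neg_add_le_rpow_neg (hν : 0 ≤ ν) (ht : 0 ≤ t) (ha : 0 < a) :
    (t + a) ^ (-ν) ≤ a ^ (-ν) :=
  rpow_le_rpow_of_nonpos ha (le_add_of_nonneg_left ht) (neg_nonpos.2 hν)

lemma rpow_neg_sub_rpow_neg_add_le (hν : 0 ≤ ν) (ht : 0 ≤ t) (ha : 0 < a) (hab : a ≤ b) :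
    b ^ (-ν) - (t + b) ^ (-ν) ≤ a ^ (-ν) - (t + a) ^ (-ν) := by
  have hb : 0 < b := ha.trans_le hab
  have factor : ∀ c > 0, c ^ (-ν) - (t + c) ^ (-ν) = c ^ (-ν) * (1 - (1 + t / c) ^ (-ν)) := by
    intro c hc
    rw [show t + c = c * (1 + t / c) by field_simp; ring, mul_rpow hc.le (by positivity)]
    ring
  rw [factor b hb, factor a ha]
  have hrel : (1 + t / a) ^ (-ν) ≤ (1 + t / b) ^ (-ν) :=
    rpow_le_rpow_of_nonpos (by positivity) (by gcongr) (neg_nonpos.2 hν)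
  have hle_one : (1 + t / b) ^ (-ν) ≤ 1 :=
    rpow_le_one_of_one_le_of_nonpos (by simp; positivity) (neg_nonpos.2 hν)
  exact mul_le_mul (rpow_le_rpow_of_nonpos ha hab (neg_nonpos.2 hν)) (by linarith)
    (by linarith) (by positivity)

end NegativePowers

section Weights

variable {Z ν ε σ x δ xbar : ℝ}

lemma weight_error_le_of_le (hZ : 0 < Z) (hε : 0 ≤ ε) (hx : 0 < x)
    (hxδ : x ≤ δ) :
    x ^ (ν + ε) * ((Z * x) ^ (-ν) - (σ ^ 2 + Z * x) ^ (-ν)) ≤ Z ^ (-ν) * δ ^ ε :=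
  calc x ^ (ν + ε) * ((Z * x) ^ (-ν) - (σ ^ 2 + Z * x) ^ (-ν))
      ≤ x ^ (ν + ε) * (Z * x) ^ (-ν) := by gcongr; exact sub_le_self _ (by positivity)
    _ = Z ^ (-ν) * x ^ ε := by
      rw [mul_rpow hZ.le hx.le, rpow_add hx, rpow_neg hx.le, rpow_neg hZ.le]
      field_simp
    _ ≤ Z ^ (-ν) * δ ^ ε := by gcongr

lemma weight_error_le_of_ge (hZ : 0 < Z) (hν : 0 ≤ ν) (hνε : 0 ≤ ν + ε) (hδ : 0 < δ)
    (hδx : δ ≤ x) (hxb : x ≤ xbar) :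
    x ^ (ν + ε) * ((Z * x) ^ (-ν) - (σ ^ 2 + Z * x) ^ (-ν)) ≤
      xbar ^ (ν + ε) * ((Z * δ) ^ (-ν) - (σ ^ 2 + Z * δ) ^ (-ν)) :=
  mul_le_mul (rpow_le_rpow (hδ.le.trans hδx) hxb hνε)
    (rpow_neg_sub_rpow_neg_add_le hν (sq_nonneg σ) (by positivity) (by gcongr))
    (sub_nonneg.2 (rpow_neg_add_le_rpow_neg hν (sq_nonneg σ) (mul_pos hZ (hδ.trans_le hδx))))
    (rpow_nonneg (hδ.le.trans (hδx.trans hxb)) _)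

lemma eventually_forall_mem_Ioc_weight_error_lt (hZ : 0 < Z) (hν : 0 < ν) (hε : 0 < ε)
    {η : ℝ} (hη : 0 < η) :
    ∀ᶠ σ in 𝓝 0, ∀ x ∈ Ioc 0 xbar,
      x ^ (ν + ε) * |(σ ^ 2 + Z * x) ^ (-ν) - (Z * x) ^ (-ν)| < η := by
  obtain ⟨δ, hδη, hδ⟩ : ∃ δ, Z ^ (-ν) * δ ^ ε < η ∧ 0 < δ := by
    have hsmall : Tendsto (fun δ : ℝ => Z ^ (-ν) * δ ^ ε) (𝓝[>] 0) (𝓝 0) := by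
      simpa [zero_rpow hε.ne'] using ((continuousAt_rpow_const 0 ε (.inr hε.le)).tendsto.const_mul
        (Z ^ (-ν))).mono_left nhdsWithin_le_nhds
    exact ((hsmall.eventually (gt_mem_nhds hη)).and self_mem_nhdsWithin).exists
  have hlarge : Tendsto (fun σ : ℝ => xbar ^ (ν + ε) * ((Z * δ) ^ (-ν) - (σ ^ 2 + Z * δ) ^ (-ν)))
      (𝓝 0) (𝓝 0) := by
    have hbase : Tendsto (fun σ : ℝ => σ ^ 2 + Z * δ) (𝓝 0) (𝓝 (Z * δ)) := by
      simpa using ((continuous_pow 2).tendsto (0 : ℝ)).add_const (Z * δ)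
    simpa using ((tendsto_const_nhds (x := (Z * δ) ^ (-ν))).sub
      (hbase.rpow_const (p := -ν) (.inl (by positivity)))).const_mul (xbar ^ (ν + ε))
  filter_upwards [hlarge.eventually (gt_mem_nhds hη)] with σ hσ x ⟨hx, hxb⟩
  rw [abs_sub_comm, abs_of_nonneg (sub_nonneg.2
    (rpow_neg_add_le_rpow_neg hν.le (sq_nonneg σ) (by positivity)))]
  rcases le_total x δ with hxδ | hδx
  · exact (weight_error_le_of_le hZ hε.le hx hxδ).trans_lt hδη
  · exact (weight_error_le_of_ge hZ hν.le (by positivity) hδ hδx hxb).trans_lt hσ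

end Weights

theorem stmt16_general (Z xbar ν ε : ℝ) (hZ : 0 < Z)
    (hν : 0 < ν) (hε : 0 < ε) :
    Filter.Tendsto
      (fun σ : ℝ => ⨆ x ∈ Set.Ioc (0 : ℝ) xbar,
        x ^ (ν + ε) * |(σ ^ 2 + Z * x) ^ (-ν) - (Z * x) ^ (-ν)|)
      (nhdsWithin 0 (Set.Ioi 0)) (nhds 0) ∧
    TendstoUniformlyOn
      (fun σ : ℝ => fun x : ℝ => x ^ (ν + ε) * (σ ^ 2 + Z * x) ^ (-ν))
      (fun x : ℝ => x ^ (ν + ε) * (Z * x) ^ (-ν))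
      (nhdsWithin 0 (Set.Ioi 0)) (Set.Ioc 0 xbar) := by
  have key (η : ℝ) (hη : 0 < η) := (eventually_forall_mem_Ioc_weight_error_lt (xbar := xbar)
    hZ hν hε hη).filter_mono (nhdsWithin_le_nhds (s := Ioi 0))
  refine ⟨tendsto_biSup_of_forall_eventually_lt
    (fun _ x hx => mul_nonneg (rpow_nonneg hx.1.le _) (abs_nonneg _)) key, ?_⟩
  rw [Metric.tendstoUniformlyOn_iff]
  intro η hη
  filter_upwards [key η hη] with σ hσ x hx
  rw [Real.dist_eq, ← mul_sub, abs_mul, abs_of_pos (rpow_pos_of_pos hx.1 _), abs_sub_comm]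
  exact hσ x hx

/-- `sup_{x ∈ (0,x̄]} x^{ν+ε}·|(σ²+Zx)^{−ν} − (Zx)^{−ν}| → 0` as
`σ → 0⁺`; that is, `x^{ν+ε}(σ²+Zx)^{−ν}` converges to `x^{ν+ε}(Zx)^{−ν}` uniformly on
`(0, x̄]` as `σ → 0⁺`. -/
theorem stmt16 (Z xbar ν ε : ℝ) (hZ : 0 < Z) (hxbar : 0 < xbar)
    (hν : 0 < ν) (hε : 0 < ε) :
    Filter.Tendsto
      (fun σ : ℝ => ⨆ x ∈ Set.Ioc (0 : ℝ) xbar,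
        x ^ (ν + ε) * |(σ ^ 2 + Z * x) ^ (-ν) - (Z * x) ^ (-ν)|)
      (nhdsWithin 0 (Set.Ioi 0)) (nhds 0) ∧
    TendstoUniformlyOn
      (fun σ : ℝ => fun x : ℝ => x ^ (ν + ε) * (σ ^ 2 + Z * x) ^ (-ν))
      (fun x : ℝ => x ^ (ν + ε) * (Z * x) ^ (-ν))
      (nhdsWithin 0 (Set.Ioi 0)) (Set.Ioc 0 xbar) :=
  stmt16_general Z xbar ν ε hZ hν hε
end
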